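/- arXiv:2110.07000 — 7 statements merged into one kernel-verified Lean document; each statement's English description precedes it below -/
import Mathlib

section
/- Let G be a connected simple graph on a finite vertex set V and let P : V → Fin k (k ≥ 1) be a surjective map such that each cluster P⁻¹(r) induces a connected subgraph of G. If every cross edge of G with respect to P is a bridge of G, then the quotient graph of G under P is a tree and P has no parallel cross edges (i.e., P is a tree partition of G). -/
open Matrix

variable {V : Type*}

/-- The set of cross edges of `G` with respect to the partition map `P`:
edges of `G` whose two endpoints lie in different clusters. -/
def crossEdges {k : ℕ} (G : SimpleGraph V) (P : V → Fin k) : Set (Sym2 V) :=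
  {e | e ∈ G.edgeSet ∧ ¬ (Sym2.map P e).IsDiag}

/-- The quotient (reduced) graph of `G` under `P`: vertices are the `k` clusters,
and distinct clusters `r`, `s` are adjacent iff `G` has a cross edge with one
endpoint in cluster `r` and the other in cluster `s`. -/
def quotientGraph {k : ℕ} (G : SimpleGraph V) (P : V → Fin k) : SimpleGraph (Fin k) where
  Adj r s := r ≠ s ∧ ∃ u v, G.Adj u v ∧ P u = r ∧ P v = s
  symm := by
    constructor
    rintro r s ⟨hrs, u, v, huv, hu, hv⟩
    exact ⟨hrs.symm, v, u, huv.symm, hv, hu⟩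
  loopless := by
    constructor
    rintro r ⟨hrr, -⟩
    exact hrr rfl

/-- `P` has no parallel cross edges: distinct cross edges of `G` join distinct
(unordered) pairs of clusters. -/
def NoParallelCrossEdges {k : ℕ} (G : SimpleGraph V) (P : V → Fin k) : Prop :=
  ∀ e₁ ∈ crossEdges G P, ∀ e₂ ∈ crossEdges G P, Sym2.map P e₁ = Sym2.map P e₂ → e₁ = e₂

/-!
Since every cross edge is a bridge, no cross edge lies on a cycle of `G`. Each cluster is
connected through internal edges, so a cycle in the quotient graph, or a second cross edge
between the same two clusters, would lift to a cycle of `G` through a cross edge.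
-/

namespace SimpleGraph

variable {k : ℕ} {G : SimpleGraph V} {P : V → Fin k}

lemma mk_mem_crossEdges {u v : V} : s(u, v) ∈ crossEdges G P ↔ G.Adj u v ∧ P u ≠ P v := by
  simp [crossEdges]

lemma reachable_deleteEdges_crossEdges_of_eq
    (hcl : ∀ r : Fin k, (G.induce (P ⁻¹' {r})).Connected) {u v : V} (h : P u = P v) :
    (G.deleteEdges (crossEdges G P)).Reachable u v := by
  have hinduce :
      G.induce (P ⁻¹' {P u}) = (G.deleteEdges (crossEdges G P)).induce (P ⁻¹' {P u}) := by
    ext ⟨a, ha⟩ ⟨b, hb⟩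
    simp only [Set.mem_preimage, Set.mem_singleton_iff] at ha hb
    simp [mk_mem_crossEdges, ha, hb]
  have hreach := (hcl (P u)).preconnected ⟨u, rfl⟩ ⟨v, h.symm⟩
  rw [hinduce] at hreach
  exact hreach.map (Embedding.induce _).toHom

lemma reachable_deleteEdges_of_eq
    (hcl : ∀ r : Fin k, (G.induce (P ⁻¹' {r})).Connected) {e : Sym2 V}
    (he : e ∈ crossEdges G P) {u v : V} (h : P u = P v) :
    (G.deleteEdges {e}).Reachable u v :=
  (reachable_deleteEdges_crossEdges_of_eq hcl h).mono
    (deleteEdges_anti (Set.singleton_subset_iff.2 he))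

lemma reachable_deleteEdges_of_adj
    (hcl : ∀ r : Fin k, (G.induce (P ⁻¹' {r})).Connected) {e : Sym2 V}
    (he : e ∈ crossEdges G P) {u v u' v' : V} (hadj : G.Adj u' v') (hne : s(u', v') ≠ e)
    (hu : P u = P u') (hv : P v' = P v) :
    (G.deleteEdges {e}).Reachable u v := by
  have hadj' : (G.deleteEdges {e}).Adj u' v' := by simpa [deleteEdges_adj] using ⟨hadj, hne⟩
  exact (reachable_deleteEdges_of_eq hcl he hu).trans
    (hadj'.reachable.trans (reachable_deleteEdges_of_eq hcl he hv))

lemma reachable_quotientGraph_of_reachable {u v : V} (h : G.Reachable u v) :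
    (quotientGraph G P).Reachable (P u) (P v) := by
  rw [reachable_iff_reflTransGen] at h ⊢
  refine Relation.ReflTransGen.lift' P (fun a b hab => ?_) u v h
  by_cases hP : P a = P b
  · simp only [Function.onFun, hP, Relation.ReflTransGen.refl]
  · exact Relation.ReflTransGen.single ⟨hP, a, b, hab, rfl, rfl⟩

lemma reachable_deleteEdges_of_reachable_quotientGraph
    (hcl : ∀ r : Fin k, (G.induce (P ⁻¹' {r})).Connected) {e : Sym2 V}
    (he : e ∈ crossEdges G P) {r s : Fin k}
    (h : ((quotientGraph G P).deleteEdges {Sym2.map P e}).Reachable r s) :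
    ∀ u v : V, P u = r → P v = s → (G.deleteEdges {e}).Reachable u v := by
  obtain ⟨w⟩ := h
  induction w with
  | nil =>
    intro u v hu hv
    exact reachable_deleteEdges_of_eq hcl he (hu.trans hv.symm)
  | cons hadj _ ih =>
    intro u v hu hv
    obtain ⟨⟨-, u', v', huv, rfl, rfl⟩, hnotdel⟩ := deleteEdges_adj.1 hadj
    have hne : s(u', v') ≠ e := fun h => hnotdel (by simp [← h])
    exact (reachable_deleteEdges_of_adj hcl he huv hne hu rfl).trans (ih v' v rfl hv)

lemma connected_quotientGraph (hG : G.Connected) (hsurj : Function.Surjective P) :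
    (quotientGraph G P).Connected := by
  have : Nonempty (Fin k) := hG.nonempty.map P
  refine ⟨fun r s => ?_⟩
  obtain ⟨u, rfl⟩ := hsurj r
  obtain ⟨v, rfl⟩ := hsurj s
  exact reachable_quotientGraph_of_reachable (hG.preconnected u v)

lemma isAcyclic_quotientGraph
    (hcl : ∀ r : Fin k, (G.induce (P ⁻¹' {r})).Connected)
    (hbr : ∀ e ∈ crossEdges G P, G.IsBridge e) :
    (quotientGraph G P).IsAcyclic := by
  rw [isAcyclic_iff_forall_isBridge]
  rintro ⟨r, s⟩ ⟨hne, u, v, huv, rfl, rfl⟩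
  have hcross : s(u, v) ∈ crossEdges G P := mk_mem_crossEdges.2 ⟨huv, hne⟩
  rw [isBridge_iff]
  intro hreach
  exact isBridge_iff.1 (hbr _ hcross)
    (reachable_deleteEdges_of_reachable_quotientGraph hcl hcross hreach u v rfl rfl)

lemma noParallelCrossEdges
    (hcl : ∀ r : Fin k, (G.induce (P ⁻¹' {r})).Connected)
    (hbr : ∀ e ∈ crossEdges G P, G.IsBridge e) :
    NoParallelCrossEdges G P := by
  rintro ⟨u, v⟩ he₁ ⟨u', v'⟩ he₂ hmap
  by_contra hne
  have hadj := (mk_mem_crossEdges.1 he₂).1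
  refine isBridge_iff.1 (hbr _ he₁) ?_
  rcases Sym2.eq_iff.1 (by simpa using hmap) with ⟨hu, hv⟩ | ⟨hu, hv⟩
  · exact reachable_deleteEdges_of_adj hcl he₁ hadj (Ne.symm hne) hu hv.symm
  · exact reachable_deleteEdges_of_adj hcl he₁ hadj.symm (by rwa [Sym2.eq_swap, ne_comm]) hu
      hv.symm

end SimpleGraph

open SimpleGraph in
theorem bridges_imply_tree_partition_general {k : ℕ}
    (G : SimpleGraph V) (hG : G.Connected) (P : V → Fin k)
    (hsurj : Function.Surjective P)
    (hcl : ∀ r : Fin k, (G.induce (P ⁻¹' {r})).Connected)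
    (hbr : ∀ e ∈ crossEdges G P, G.IsBridge e) :
    (quotientGraph G P).IsTree ∧ NoParallelCrossEdges G P :=
  ⟨⟨connected_quotientGraph hG hsurj, isAcyclic_quotientGraph hcl hbr⟩,
    noParallelCrossEdges hcl hbr⟩

theorem bridges_imply_tree_partition [Fintype V] {k : ℕ} (hk : 1 ≤ k)
    (G : SimpleGraph V) (hG : G.Connected) (P : V → Fin k)
    (hsurj : Function.Surjective P)
    (hcl : ∀ r : Fin k, (G.induce (P ⁻¹' {r})).Connected)
    (hbr : ∀ e ∈ crossEdges G P, G.IsBridge e) :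
    (quotientGraph G P).IsTree ∧ NoParallelCrossEdges G P :=
  bridges_imply_tree_partition_general G hG P hsurj hcl hbr
end

section
/- Let G be a connected simple graph on a finite vertex set V and let P : V → Fin k (k ≥ 1) be a surjective map. If G has exactly k − 1 cross edges with respect to P, then each cluster P⁻¹(r) induces a connected subgraph of G. -/
/-!
Delete the cross edges. Adding an edge back merges at most two components, so the remaining
graph `H` has at most `1 + (k - 1) = k` components. Every edge of `H` stays inside a cluster, so
`P` factors through a surjection from the components of `H` onto the `k` clusters, which is then
a bijection: each cluster is the vertex set of a single component of `H ≤ G`.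
-/
open Matrix

variable {V : Type*}

namespace SimpleGraph

variable {H : SimpleGraph V}

theorem Reachable.elim_sup_edge {a b u v : V} (h : (H ⊔ edge a b).Reachable u v) :
    H.Reachable u v ∨ (H.Reachable u a ∧ H.Reachable b v) ∨
      (H.Reachable u b ∧ H.Reachable a v) := by
  obtain ⟨p⟩ := h
  induction p with
  | nil => exact .inl .rfl
  | @cons x y z hxy p ih =>
    rw [sup_adj, edge_adj] at hxy
    rcases hxy with hxy | ⟨⟨rfl, rfl⟩ | ⟨rfl, rfl⟩, -⟩
    · rcases ih with h | ⟨h₁, h₂⟩ | ⟨h₁, h₂⟩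
      · exact .inl (hxy.reachable.trans h)
      · exact .inr (.inl ⟨hxy.reachable.trans h₁, h₂⟩)
      · exact .inr (.inr ⟨hxy.reachable.trans h₁, h₂⟩)
    · rcases ih with h | ⟨h₁, h₂⟩ | ⟨-, h₂⟩
      · exact .inr (.inl ⟨.rfl, h⟩)
      · exact .inl (h₁.symm.trans h₂)
      · exact .inl h₂
    · rcases ih with h | ⟨-, h₂⟩ | ⟨h₁, h₂⟩
      · exact .inr (.inr ⟨.rfl, h⟩)
      · exact .inl h₂
      · exact .inl (h₁.symm.trans h₂)

theorem card_connectedComponent_le_card_sup_edge_add_one [Finite V] (a b : V) :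
    Nat.card H.ConnectedComponent ≤ Nat.card (H ⊔ edge a b).ConnectedComponent + 1 := by
  classical
  -- injective because components of `H` other than that of `a` stay apart in `H ⊔ edge a b`
  let φ (C : H.ConnectedComponent) : Option (H ⊔ edge a b).ConnectedComponent :=
    if C = H.connectedComponentMk a then none else some (C.map (Hom.ofLE le_sup_left))
  have hφ : φ.Injective := by
    refine ConnectedComponent.ind₂ fun u v huv => ?_
    by_cases hu : H.connectedComponentMk u = H.connectedComponentMk a <;>
      by_cases hv : H.connectedComponentMk v = H.connectedComponentMk a <;>
      simp only [φ, hu, hv, if_true, if_false, reduceCtorEq] at huv ⊢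
    rw [Option.some_inj, ConnectedComponent.map_mk, ConnectedComponent.map_mk,
      ConnectedComponent.eq] at huv
    rw [ConnectedComponent.eq] at hu hv ⊢
    rcases huv.elim_sup_edge with h | ⟨h, -⟩ | ⟨-, h⟩
    exacts [h, absurd h hu, absurd h.symm hv]
  calc Nat.card H.ConnectedComponent
      ≤ Nat.card (Option (H ⊔ edge a b).ConnectedComponent) := Nat.card_le_card_of_injective φ hφ
    _ = _ := Finite.card_option

theorem card_connectedComponent_le_card_sup_fromEdgeSet_add_ncard [Finite V]
    {s : Set (Sym2 V)} (hs : s.Finite) :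
    Nat.card H.ConnectedComponent ≤ Nat.card (H ⊔ fromEdgeSet s).ConnectedComponent + s.ncard := by
  induction s, hs using Set.Finite.induction_on with
  | empty => simp
  | @insert e t he ht ih =>
    induction e with
    | h a b =>
      have hsup : H ⊔ fromEdgeSet (insert s(a, b) t) = H ⊔ fromEdgeSet t ⊔ edge a b := by
        rw [Set.insert_eq, fromEdgeSet_union, sup_comm (fromEdgeSet _), ← sup_assoc, edge]
      rw [hsup, Set.ncard_insert_of_notMem he ht]
      have := card_connectedComponent_le_card_sup_edge_add_one (H := H ⊔ fromEdgeSet t) a b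
      omega

theorem connected_induce_preimage_of_card_connectedComponent_le [Finite V] {β : Type*}
    {f : V → β} (hf : ∀ u v, H.Adj u v → f u = f v) (hsurj : f.Surjective)
    (hcard : Nat.card H.ConnectedComponent ≤ Nat.card β) (b : β) :
    (H.induce (f ⁻¹' {b})).Connected := by
  have hwalk {u v : V} (p : H.Walk u v) : f u = f v := by
    induction p with
    | nil => rfl
    | cons h _ ih => exact (hf _ _ h).trans ih
  let g : H.ConnectedComponent → β := ConnectedComponent.lift f fun _ _ p _ => hwalk p
  have hg_surj : g.Surjective := fun b =>
    (hsurj b).elim fun v hv => ⟨H.connectedComponentMk v, hv⟩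
  have hg_inj : g.Injective := (hg_surj.bijective_of_nat_card_le hcard).1
  obtain ⟨C, rfl⟩ := hg_surj b
  have hfiber : f ⁻¹' {g C} = C.supp := by
    ext v
    rw [ConnectedComponent.mem_supp_iff, ← hg_inj.eq_iff]
    rfl
  rw [hfiber]
  exact C.connected_toSimpleGraph

end SimpleGraph

open SimpleGraph

theorem eq_of_adj_deleteEdges_crossEdges {k : ℕ} {G : SimpleGraph V} {P : V → Fin k} {u v : V}
    (h : (G.deleteEdges (crossEdges G P)).Adj u v) : P u = P v := by
  rw [deleteEdges_adj] at h
  by_contra hne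
  exact h.2 ⟨h.1, by simpa using hne⟩

theorem clusters_connected_of_card_crossEdges [Fintype V] {k : ℕ} (hk : 1 ≤ k)
    (G : SimpleGraph V) (hG : G.Connected) (P : V → Fin k)
    (hsurj : Function.Surjective P)
    (hcount : (crossEdges G P).ncard = k - 1) :
    ∀ r : Fin k, (G.induce (P ⁻¹' {r})).Connected := by
  intro r
  set H := G.deleteEdges (crossEdges G P)
  have hG_card : Nat.card G.ConnectedComponent ≤ 1 :=
    Finite.card_le_one_iff_subsingleton.mpr hG.preconnected.subsingleton_connectedComponent
  have hH_card : Nat.card H.ConnectedComponent ≤ Nat.card (Fin k) := calc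
    Nat.card H.ConnectedComponent
      ≤ Nat.card (H ⊔ fromEdgeSet (crossEdges G P)).ConnectedComponent + (crossEdges G P).ncard :=
        card_connectedComponent_le_card_sup_fromEdgeSet_add_ncard (Set.toFinite _)
    _ ≤ Nat.card G.ConnectedComponent + (k - 1) := by
        rw [hcount]
        gcongr
        exact ConnectedComponent.card_le_card_of_le le_sdiff_sup
    _ ≤ Nat.card (Fin k) := by rw [Nat.card_fin]; omega
  exact (connected_induce_preimage_of_card_connectedComponent_le
    (fun _ _ => eq_of_adj_deleteEdges_crossEdges) hsurj hH_card r).mono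
    (comap_monotone _ (deleteEdges_le _))
end

section
/- Let G be a simple graph on a finite vertex set V with n = |V| vertices and let v₀ ∈ V. Suppose there exists a function q : V → V → ℝ such that q u v = −q v u for all u, v ∈ V, q u v = 0 whenever u and v are not adjacent in G, and for every v ∈ V the net outflow ∑_{u ∈ V} q v u equals n − 1 if v = v₀ and equals −1 otherwise. Then G is connected. -/
open Matrix

theorem connected_of_single_commodity_flow {V : Type*} [Fintype V] [DecidableEq V]
    (G : SimpleGraph V) (v₀ : V) (q : V → V → ℝ)
    (hskew : ∀ u v, q u v = - q v u)
    (hsupp : ∀ u v, ¬ G.Adj u v → q u v = 0)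
    (hflow : ∀ v, ∑ u, q v u =
      if v = v₀ then (Fintype.card V : ℝ) - 1 else -1) :
    G.Connected := by
  classical
  set S : Finset V := Finset.univ.filter (fun v => G.Reachable v₀ v) with hS
  have hv₀S : v₀ ∈ S := Finset.mem_filter.mpr ⟨Finset.mem_univ _, SimpleGraph.Reachable.refl _⟩
  -- flow from S to outside S is zero
  have hzero : ∀ v ∈ S, ∀ u ∈ Finset.univ \ S, q v u = 0 := by
    intro v hv u hu
    apply hsupp
    intro hadj
    simp only [hS, Finset.mem_sdiff, Finset.mem_filter, Finset.mem_univ, true_and] at hv hu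
    exact hu (hv.trans hadj.reachable)
  -- sum over S of flow
  have hsum : ∑ v ∈ S, ∑ u, q v u = 0 := by
    have : ∀ v ∈ S, ∑ u, q v u = ∑ u ∈ S, q v u := by
      intro v hv
      rw [← Finset.sum_subset (Finset.subset_univ S)]
      intro u _ hu
      exact hzero v hv u (by simp [hu])
    rw [Finset.sum_congr rfl this]
    have h1 : ∑ v ∈ S, ∑ u ∈ S, q v u = ∑ v ∈ S, ∑ u ∈ S, q u v := Finset.sum_comm
    have h2 : ∑ v ∈ S, ∑ u ∈ S, q u v = - ∑ v ∈ S, ∑ u ∈ S, q v u := by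
      rw [← Finset.sum_neg_distrib]
      refine Finset.sum_congr rfl fun v _ => ?_
      rw [← Finset.sum_neg_distrib]
      exact Finset.sum_congr rfl fun u _ => (hskew u v).trans rfl
    linarith [h1, h2]
  have hcard : (S.card : ℝ) = Fintype.card V := by
    have := hsum
    rw [Finset.sum_congr rfl (fun v _ => hflow v)] at this
    rw [← Finset.add_sum_erase S _ hv₀S] at this
    rw [if_pos rfl] at this
    rw [Finset.sum_congr rfl (fun v hv => if_neg (Finset.ne_of_mem_erase hv))] at this
    rw [Finset.sum_const, Finset.card_erase_of_mem hv₀S] at this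
    have h1 : (1 : ℕ) ≤ S.card := Finset.card_pos.mpr ⟨v₀, hv₀S⟩
    rw [nsmul_eq_mul] at this
    push_cast [h1] at this
    linarith
  have hSuniv : S = Finset.univ := by
    apply Finset.eq_univ_of_card
    exact_mod_cast hcard
  have hreach : ∀ v, G.Reachable v₀ v := by
    intro v
    have : v ∈ S := hSuniv ▸ Finset.mem_univ v
    simpa [hS] using this
  have : Nonempty V := ⟨v₀⟩
  exact SimpleGraph.Connected.mk (fun u v => (hreach u).symm.trans (hreach v))
end

section
/- Let G be a connected simple graph on a finite vertex set V, let p : V → ℝ satisfy ∑_{v ∈ V} p v = 0, and let θ : V → ℝ satisfy G.lapMatrix ℝ *ᵥ θ = p. Let {c,d} be a bridge of G and let S = { v ∈ V : v is reachable from c in the graph obtained from G by deleting the edge {c,d} }. Then θ c − θ d = ∑_{v ∈ S} p v; that is, the DC power flow on a bridge from c to d equals the total net power injection of the side of the bridge containing c. -/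
/-!
Row `v` of `L θ = p` is Kirchhoff's law at `v`: the flows `θ v - θ u` on the lines at `v` add up
to `p v`. Summing over the side `S` of the bridge containing `c`, every line inside `S` is counted
once in each direction and cancels, so `∑ v ∈ S, p v` is the flow on the lines leaving `S`; the
bridge `c d` is the only such line.
-/

open Matrix

open Finset

namespace SimpleGraph

section Laplacian

variable {V R : Type*} (G : SimpleGraph V) [DecidableRel G.Adj] [NonAssocRing R]

theorem lapMatrix_mulVec_apply_eq_sum_sub [Fintype V] [DecidableEq V] (θ : V → R) (v : V) :
    (G.lapMatrix R *ᵥ θ) v = ∑ u ∈ G.neighborFinset v, (θ v - θ u) := by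
  rw [lapMatrix_mulVec_apply, sum_sub_distrib, sum_const, card_neighborFinset_eq_degree,
    nsmul_eq_mul]

theorem sum_sum_adj_sub_eq_zero (θ : V → R) (S : Finset V) :
    ∑ v ∈ S, ∑ u ∈ S with G.Adj v u, (θ v - θ u) = 0 := by
  have hswap : ∑ v ∈ S, ∑ u ∈ S with G.Adj v u, θ u = ∑ v ∈ S, ∑ u ∈ S with G.Adj v u, θ v := by
    simp only [sum_filter]
    rw [sum_comm]
    simp only [G.adj_comm]
  simp only [sum_sub_distrib, hswap, sub_self]

theorem sum_lapMatrix_mulVec_eq_sum_cut [Fintype V] [DecidableEq V] (θ : V → R) (S : Finset V) :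
    ∑ v ∈ S, (G.lapMatrix R *ᵥ θ) v = ∑ v ∈ S, ∑ u ∈ Sᶜ with G.Adj v u, (θ v - θ u) := by
  have hsplit (v : V) : ∑ u ∈ G.neighborFinset v, (θ v - θ u) =
      ∑ u ∈ S with G.Adj v u, (θ v - θ u) + ∑ u ∈ Sᶜ with G.Adj v u, (θ v - θ u) := by
    rw [neighborFinset_eq_filter, ← sum_union (disjoint_filter_filter disjoint_compl_right),
      ← filter_union, union_compl]
  simp only [lapMatrix_mulVec_apply_eq_sum_sub, hsplit, sum_add_distrib,
    sum_sum_adj_sub_eq_zero, zero_add]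

end Laplacian

theorem eq_and_eq_of_adj_of_reachable_deleteEdges {V : Type*} (G : SimpleGraph V) {c d v u : V}
    (hv : (G.deleteEdges {s(c, d)}).Reachable c v)
    (hu : ¬(G.deleteEdges {s(c, d)}).Reachable c u) (hadj : G.Adj v u) : v = c ∧ u = d := by
  by_cases he : s(v, u) = s(c, d)
  · rcases Sym2.eq_iff.1 he with h | ⟨-, rfl⟩
    · exact h
    · exact absurd .rfl hu
  · exact absurd (hv.trans (deleteEdges_adj.2 ⟨hadj, by simpa using he⟩).reachable) hu

end SimpleGraph

theorem bridge_flow_eq_sum_injections_general {V : Type*} [Fintype V] [DecidableEq V]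
    (G : SimpleGraph V) [DecidableRel G.Adj] (hG : G.Connected)
    (p : V → ℝ)
    (θ : V → ℝ) (hθ : G.lapMatrix ℝ *ᵥ θ = p)
    (c d : V) (hbr : G.IsBridge s(c, d)) :
    θ c - θ d =
      ∑ v ∈ ({v | (G.deleteEdges {s(c, d)}).Reachable c v}).toFinite.toFinset, p v := by
  set S := ({v | (G.deleteEdges {s(c, d)}).Reachable c v}).toFinite.toFinset
  have hmem (v : V) : v ∈ S ↔ (G.deleteEdges {s(c, d)}).Reachable c v := by simp [S]
  have hcS : c ∈ S := (hmem c).2 .rfl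
  have hcd : G.Adj c d := hbr.reachable_iff_adj.1 (hG.preconnected c d)
  have hdS : d ∉ S := fun hd ↦ hbr ((hmem d).1 hd)
  have hcut (v : V) (hv : v ∈ S) (u : V) : u ∈ Sᶜ ∧ G.Adj v u ↔ v = c ∧ u = d := by
    refine ⟨fun ⟨hu, hvu⟩ ↦ ?_, ?_⟩
    · exact G.eq_and_eq_of_adj_of_reachable_deleteEdges ((hmem v).1 hv)
        (by simpa [hmem] using hu) hvu
    · rintro ⟨rfl, rfl⟩
      exact ⟨mem_compl.2 hdS, hcd⟩
  rw [← hθ, G.sum_lapMatrix_mulVec_eq_sum_cut, sum_eq_single_of_mem c hcS]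
  · have hcut_c : ({u ∈ Sᶜ | G.Adj c u} : Finset V) = {d} := by
      ext u
      simp only [mem_filter, hcut c hcS, true_and, mem_singleton]
    rw [hcut_c, sum_singleton]
  · intro v hv hvc
    exact sum_eq_zero fun u hu ↦ absurd ((hcut v hv u).1 (mem_filter.1 hu)).1 hvc

theorem bridge_flow_eq_sum_injections {V : Type*} [Fintype V] [DecidableEq V]
    (G : SimpleGraph V) [DecidableRel G.Adj] (hG : G.Connected)
    (p : V → ℝ) (hp : ∑ v, p v = 0)
    (θ : V → ℝ) (hθ : G.lapMatrix ℝ *ᵥ θ = p)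
    (c d : V) (hbr : G.IsBridge s(c, d)) :
    θ c - θ d =
      ∑ v ∈ ({v | (G.deleteEdges {s(c, d)}).Reachable c v}).toFinite.toFinset, p v :=
  bridge_flow_eq_sum_injections_general G hG p θ hθ c d hbr
end

section
/- Let G be a connected simple graph on a finite vertex set V, let {c,d} be a bridge of G, and let S = { v ∈ V : v is reachable from c in the graph obtained from G by deleting the edge {c,d} }. Let {a,b} be an edge of G, distinct from {c,d}, with a ∉ S and b ∉ S, which is not a bridge of G, and let G' be the graph obtained from G by deleting {a,b}. Let p : V → ℝ satisfy ∑_{v ∈ V} p v = 0, let θ : V → ℝ satisfy G.lapMatrix ℝ *ᵥ θ = p, and let θ' : V → ℝ satisfy G'.lapMatrix ℝ *ᵥ θ' = p. Then θ' u − θ' v = θ u − θ v for all u, v ∈ S, and θ' c − θ' d = θ c − θ d; that is, the failure of a non-bridge line on one side of a bridge does not change the DC power flows on the other side of the bridge nor on the bridge itself. -/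
/-!
Let `K` be `G` with the bridge `cd` deleted, so that `S` is the component of `c` in `K` and `cd` is
the only edge of `G` leaving `S`. Since the indicator `𝟙_S` lies in the kernel of the (symmetric)
Laplacian of `K`, and `L_G = L_K + (e_c - e_d)(e_c - e_d)ᵀ`, summing `L_G θ = p` over `S` gives
`θ c - θ d = ∑_{v ∈ S} p v`. The rows of `L_G` and `L_{G'}` indexed by `S` coincide because `ab`
does not touch `S`, so the same holds for `θ'`. Hence `δ = θ' - θ` satisfies `δ c = δ d`, so
`L_K δ = L_G δ`, which vanishes on `S`. Extending `δ|_S` by zero gives an element of `ker L_K`,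
and those are constant on components: `δ` is constant on `S`.
-/

open Matrix

namespace SimpleGraph

variable {V R : Type*} [Fintype V] [DecidableEq V]

theorem lapMatrix_mulVec_apply_eq_sum_ite [Ring R] (G : SimpleGraph V) [DecidableRel G.Adj]
    (x : V → R) (u : V) :
    (G.lapMatrix R *ᵥ x) u = ∑ w, if G.Adj u w then x u - x w else 0 := by
  rw [lapMatrix_mulVec_apply, ← Finset.sum_filter, ← neighborFinset_eq_filter,
    Finset.sum_sub_distrib, Finset.sum_const, card_neighborFinset_eq_degree, nsmul_eq_mul]

theorem lapMatrix_mulVec_apply_congr [Ring R] {G : SimpleGraph V} [DecidableRel G.Adj]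
    {x y : V → R} {u : V} (hu : x u = y u) (hadj : ∀ w, G.Adj u w → x w = y w) :
    (G.lapMatrix R *ᵥ x) u = (G.lapMatrix R *ᵥ y) u := by
  simp only [lapMatrix_mulVec_apply_eq_sum_ite]
  refine Finset.sum_congr rfl fun w _ => ?_
  split_ifs with h
  · rw [hu, hadj w h]
  · rfl

theorem lapMatrix_deleteEdges_mulVec_apply_of_notMem [Ring R] (G : SimpleGraph V)
    [DecidableRel G.Adj] {e : Sym2 V} [DecidableRel (G.deleteEdges {e}).Adj] {u : V}
    (hu : u ∉ e) (x : V → R) :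
    ((G.deleteEdges {e}).lapMatrix R *ᵥ x) u = (G.lapMatrix R *ᵥ x) u := by
  have hadj : ∀ w, (G.deleteEdges {e}).Adj u w ↔ G.Adj u w := fun w => by
    simpa using fun _ (he : s(u, w) = e) => hu (he ▸ Sym2.mem_mk_left u w)
  simp only [lapMatrix_mulVec_apply_eq_sum_ite, hadj]

theorem lapMatrix_mulVec_eq_deleteEdges_add [Ring R] {G : SimpleGraph V} [DecidableRel G.Adj]
    {c d : V} [DecidableRel (G.deleteEdges {s(c, d)}).Adj] (hcd : G.Adj c d) (x : V → R) :
    G.lapMatrix R *ᵥ x = (G.deleteEdges {s(c, d)}).lapMatrix R *ᵥ x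
      + (Pi.single c (x c - x d) + Pi.single d (x d - x c)) := by
  ext u
  simp only [Pi.add_apply, lapMatrix_mulVec_apply_eq_sum_ite, deleteEdges_adj,
    Set.mem_singleton_iff]
  have hsplit : ∀ w, (if G.Adj u w then x u - x w else 0)
      = (if G.Adj u w ∧ ¬s(u, w) = s(c, d) then x u - x w else 0)
        + ((if u = c ∧ w = d then x c - x d else 0) + if u = d ∧ w = c then x d - x c else 0) := by
    intro w
    by_cases he : s(u, w) = s(c, d)
    · obtain ⟨rfl, rfl⟩ | ⟨rfl, rfl⟩ := Sym2.eq_iff.mp he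
      · simp [hcd, hcd.ne]
      · simp [hcd.symm, hcd.ne]
    · have : ¬(u = c ∧ w = d) ∧ ¬(u = d ∧ w = c) := by
        constructor <;> rintro ⟨rfl, rfl⟩ <;> simp [Sym2.eq_swap] at he
      simp [he, this]
  simp [Finset.sum_congr rfl fun w _ => hsplit w, Finset.sum_add_distrib, ite_and,
    Pi.single_apply]

section ClosedSet

variable {G : SimpleGraph V} [DecidableRel G.Adj] {T : Set V}

theorem lapMatrix_mulVec_indicator_eq_zero [Ring R] (hT : ∀ u v, G.Adj u v → u ∈ T → v ∈ T)
    {x : V → R} (hx : ∀ u ∈ T, (G.lapMatrix R *ᵥ x) u = 0) :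
    G.lapMatrix R *ᵥ T.indicator x = 0 := by
  ext u
  by_cases hu : u ∈ T
  · rw [lapMatrix_mulVec_apply_congr (y := x) (Set.indicator_of_mem hu x)
      fun w huw => Set.indicator_of_mem (hT u w huw hu) x, hx u hu, Pi.zero_apply]
  · rw [lapMatrix_mulVec_apply_congr (y := 0) (Set.indicator_of_notMem hu x)
      fun w huw => Set.indicator_of_notMem (fun hw => hu (hT w u huw.symm hw)) x, mulVec_zero]

theorem indicator_one_dotProduct_lapMatrix_mulVec_eq_zero [CommRing R]
    (hT : ∀ u v, G.Adj u v → u ∈ T → v ∈ T) (x : V → R) :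
    T.indicator 1 ⬝ᵥ (G.lapMatrix R *ᵥ x) = 0 := by
  have hone : G.lapMatrix R *ᵥ T.indicator 1 = 0 :=
    lapMatrix_mulVec_indicator_eq_zero hT fun u _ =>
      congrFun (lapMatrix_mulVec_const_eq_zero G) u
  rw [dotProduct_mulVec, ← mulVec_transpose, isSymm_lapMatrix, hone, zero_dotProduct]

end ClosedSet

theorem eq_of_reachable_of_lapMatrix_mulVec_eq_zero {G : SimpleGraph V} [DecidableRel G.Adj]
    {c : V} {x : V → ℝ} (hx : ∀ u, G.Reachable c u → (G.lapMatrix ℝ *ᵥ x) u = 0)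
    {u : V} (hu : G.Reachable c u) : x u = x c := by
  have hy := lapMatrix_mulVec_indicator_eq_zero (T := {v | G.Reachable c v})
    (fun _ _ hvw hv => hv.trans hvw.reachable) hx
  simpa [Set.indicator_apply, hu] using
    (lapMatrix_mulVec_eq_zero_iff_forall_reachable G).mp hy u c hu.symm

theorem indicator_one_dotProduct_lapMatrix_mulVec_of_isBridge [CommRing R]
    {G : SimpleGraph V} [DecidableRel G.Adj] {c d : V}
    [DecidableRel (G.deleteEdges {s(c, d)}).Adj] (hcd : G.Adj c d) (hbr : G.IsBridge s(c, d))
    (x : V → R) :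
    {v | (G.deleteEdges {s(c, d)}).Reachable c v}.indicator 1 ⬝ᵥ (G.lapMatrix R *ᵥ x)
      = x c - x d := by
  rw [lapMatrix_mulVec_eq_deleteEdges_add hcd, dotProduct_add,
    indicator_one_dotProduct_lapMatrix_mulVec_eq_zero (fun _ _ hvw hv => hv.trans hvw.reachable),
    zero_add, dotProduct_add, dotProduct_single, dotProduct_single]
  simp [isBridge_iff.mp hbr]

end SimpleGraph

open SimpleGraph

open scoped Classical in
theorem flow_unchanged_across_bridge_general {V : Type*} [Fintype V] [DecidableEq V]
    (G : SimpleGraph V) [DecidableRel G.Adj] (hG : G.Connected)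
    (c d : V) (hbr : G.IsBridge s(c, d))
    (S : Set V) (hS : S = {v | (G.deleteEdges {s(c, d)}).Reachable c v})
    (a b : V)
    (haS : a ∉ S) (hbS : b ∉ S)
    (p : V → ℝ)
    (θ : V → ℝ) (hθ : G.lapMatrix ℝ *ᵥ θ = p)
    (θ' : V → ℝ) (hθ' : (G.deleteEdges {s(a, b)}).lapMatrix ℝ *ᵥ θ' = p) :
    (∀ u ∈ S, ∀ v ∈ S, θ' u - θ' v = θ u - θ v) ∧ θ' c - θ' d = θ c - θ d := by
  subst hS
  have hcd : G.Adj c d := hbr.reachable_iff_adj.mp (hG.preconnected c d)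
  have hrow : ∀ u ∈ {v | (G.deleteEdges {s(c, d)}).Reachable c v}, ∀ x : V → ℝ,
      ((G.deleteEdges {s(a, b)}).lapMatrix ℝ *ᵥ x) u = (G.lapMatrix ℝ *ᵥ x) u := by
    refine fun u hu x => lapMatrix_deleteEdges_mulVec_apply_of_notMem G (fun hab => ?_) x
    rcases Sym2.mem_iff.mp hab with rfl | rfl
    exacts [haS hu, hbS hu]
  have hflow : θ' c - θ' d = θ c - θ d := by
    rw [← indicator_one_dotProduct_lapMatrix_mulVec_of_isBridge hcd hbr θ, hθ, ← hθ',
      ← indicator_one_dotProduct_lapMatrix_mulVec_of_isBridge hcd hbr θ']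
    refine Finset.sum_congr rfl fun u _ => ?_
    by_cases hu : u ∈ {v | (G.deleteEdges {s(c, d)}).Reachable c v}
    · rw [hrow u hu]
    · simp only [Set.indicator_of_notMem hu, zero_mul]
  have hharm : ∀ u, (G.deleteEdges {s(c, d)}).Reachable c u →
      ((G.deleteEdges {s(c, d)}).lapMatrix ℝ *ᵥ (θ' - θ)) u = 0 := by
    have hGK := lapMatrix_mulVec_eq_deleteEdges_add hcd (θ' - θ)
    rw [show (θ' - θ) c = (θ' - θ) d by simp only [Pi.sub_apply]; linarith, sub_self,
      Pi.single_zero, Pi.single_zero, add_zero, add_zero] at hGK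
    intro u hu
    rw [← hGK, mulVec_sub, Pi.sub_apply, ← hrow u hu, hθ', hθ, sub_self]
  refine ⟨fun u hu v hv => ?_, hflow⟩
  have hu' := eq_of_reachable_of_lapMatrix_mulVec_eq_zero hharm hu
  have hv' := eq_of_reachable_of_lapMatrix_mulVec_eq_zero hharm hv
  simp only [Pi.sub_apply] at hu' hv'
  linarith

open scoped Classical in
theorem flow_unchanged_across_bridge {V : Type*} [Fintype V] [DecidableEq V]
    (G : SimpleGraph V) [DecidableRel G.Adj] (hG : G.Connected)
    (c d : V) (hbr : G.IsBridge s(c, d))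
    (S : Set V) (hS : S = {v | (G.deleteEdges {s(c, d)}).Reachable c v})
    (a b : V) (hab : G.Adj a b) (hne : s(a, b) ≠ s(c, d))
    (haS : a ∉ S) (hbS : b ∉ S) (hnb : ¬ G.IsBridge s(a, b))
    (p : V → ℝ) (hp : ∑ v, p v = 0)
    (θ : V → ℝ) (hθ : G.lapMatrix ℝ *ᵥ θ = p)
    (θ' : V → ℝ) (hθ' : (G.deleteEdges {s(a, b)}).lapMatrix ℝ *ᵥ θ' = p) :
    (∀ u ∈ S, ∀ v ∈ S, θ' u - θ' v = θ u - θ v) ∧ θ' c - θ' d = θ c - θ d :=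
  flow_unchanged_across_bridge_general G hG c d hbr S hS a b haS hbS p θ hθ θ' hθ'
end

section
/- Let G be a connected simple graph on a finite vertex set V and let P : V → Fin k (k ≥ 1) be a surjective map such that each cluster P⁻¹(r) induces a connected subgraph of G. Then there exists a set D of cross edges of G with respect to P such that the graph G^D obtained from G by deleting the edges in D is connected and has exactly k − 1 cross edges with respect to P; in particular, P is a tree partition of the post-switching network G^D. -/
open Matrix

variable {V : Type*}

/-!
Since `G` is connected, so is its quotient graph; pick a spanning tree `T` of the quotient and,
for every edge of `T`, one cross edge of `G` realising it. Switching off all other cross edges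
keeps every cluster intact, so the remaining graph is connected (clusters are connected and
glued along `T`), its quotient graph is exactly `T`, and its cross edges correspond bijectively
to the `k - 1` edges of `T`.
-/

namespace SimpleGraph

lemma IsTree.ncard_edgeSet_add_one {W : Type*} [Fintype W] {T : SimpleGraph W} (hT : T.IsTree) :
    T.edgeSet.ncard + 1 = Fintype.card W := by
  classical
  rw [← hT.card_edgeFinset, ← coe_edgeFinset, Set.ncard_coe_finset]

end SimpleGraph

open SimpleGraph

section Quotient

variable {k : ℕ} {G H : SimpleGraph V} {P : V → Fin k}

lemma mem_crossEdges_mk {u v : V} : s(u, v) ∈ crossEdges G P ↔ G.Adj u v ∧ P u ≠ P v := by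
  simp [crossEdges]

lemma edgeSet_quotientGraph : (quotientGraph G P).edgeSet = Sym2.map P '' crossEdges G P := by
  ext e
  induction e using Sym2.ind with
  | _ r s =>
    constructor
    · rintro ⟨hrs, u, v, huv, rfl, rfl⟩
      exact ⟨s(u, v), mem_crossEdges_mk.2 ⟨huv, hrs⟩, rfl⟩
    · rintro ⟨f, hf, hfrs⟩
      induction f using Sym2.ind with
      | _ u v =>
        obtain ⟨huv, hne⟩ := mem_crossEdges_mk.1 hf
        rcases Sym2.eq_iff.1 hfrs with ⟨rfl, rfl⟩ | ⟨rfl, rfl⟩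
        · exact ⟨hne, u, v, huv, rfl, rfl⟩
        · exact ⟨hne.symm, v, u, huv.symm, rfl, rfl⟩

lemma SimpleGraph.Walk.reachable_quotientGraph {u v : V} (p : G.Walk u v) :
    (quotientGraph G P).Reachable (P u) (P v) := by
  induction p with
  | nil => rfl
  | @cons a b _ hab _ ih =>
    by_cases hP : P a = P b
    · rwa [hP]
    · exact Adj.reachable (G := quotientGraph G P) ⟨hP, a, b, hab, rfl, rfl⟩ |>.trans ih

lemma SimpleGraph.Connected.quotientGraph (hG : G.Connected) (hP : Function.Surjective P) :
    (quotientGraph G P).Connected := by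
  have : Nonempty (Fin k) := ⟨P hG.nonempty.some⟩
  refine ⟨fun r s => ?_⟩
  obtain ⟨u, rfl⟩ := hP r
  obtain ⟨v, rfl⟩ := hP s
  exact (hG u v).some.reachable_quotientGraph

lemma connected_of_quotientGraph (hcl : ∀ r, (H.induce (P ⁻¹' {r})).Connected)
    (hQ : (quotientGraph H P).Connected) : H.Connected := by
  have hsame : ∀ u v, P u = P v → H.Reachable u v := fun u v huv =>
    ((hcl (P v)).preconnected ⟨u, huv⟩ ⟨v, rfl⟩).map (Embedding.induce _).toHom
  have hwalk : ∀ {r s} (p : (quotientGraph H P).Walk r s) (u v : V), P u = r → P v = s →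
      H.Reachable u v := by
    intro r s p
    induction p with
    | nil => exact fun u v hu hv => hsame u v (hu.trans hv.symm)
    | cons hrs _ ih =>
      obtain ⟨-, a, b, hab, rfl, rfl⟩ := hrs
      exact fun u v hu hv => (hsame u a hu).trans (hab.reachable.trans (ih b v rfl hv))
  have : Nonempty V := ⟨(hcl hQ.nonempty.some).nonempty.some.1⟩
  exact ⟨fun u v => hwalk (hQ (P u) (P v)).some u v rfl rfl⟩

lemma induce_deleteEdges_of_subset_crossEdges {D : Set (Sym2 V)} (hD : D ⊆ crossEdges G P)
    (r : Fin k) : (G.deleteEdges D).induce (P ⁻¹' {r}) = G.induce (P ⁻¹' {r}) := by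
  ext ⟨u, hu⟩ ⟨v, hv⟩
  simp only [comap_adj, Function.Embedding.coe_subtype, deleteEdges_adj, and_iff_left_iff_imp]
  intro _ huv
  exact (mem_crossEdges_mk.1 (hD huv)).2 (hu.trans hv.symm)

lemma crossEdges_deleteEdges_diff {S : Set (Sym2 V)} (hS : S ⊆ crossEdges G P) :
    crossEdges (G.deleteEdges (crossEdges G P \ S)) P = S := by
  ext e
  simp only [crossEdges, edgeSet_deleteEdges, Set.mem_ofPred_eq, Set.mem_sdiff]
  constructor
  · rintro ⟨⟨he, hnot⟩, hnd⟩
    by_contra heS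
    exact hnot ⟨⟨he, hnd⟩, heS⟩
  · intro heS
    obtain ⟨he, hnd⟩ := hS heS
    exact ⟨⟨he, fun h => h.2 heS⟩, hnd⟩

end Quotient

theorem exists_tree_partitioning_general {k : ℕ}
    (G : SimpleGraph V) (hG : G.Connected) (P : V → Fin k)
    (hsurj : Function.Surjective P)
    (hcl : ∀ r : Fin k, (G.induce (P ⁻¹' {r})).Connected) :
    ∃ D ⊆ crossEdges G P,
      (G.deleteEdges D).Connected ∧
      (crossEdges (G.deleteEdges D) P).ncard = k - 1 ∧
      (quotientGraph (G.deleteEdges D) P).IsTree ∧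
      NoParallelCrossEdges (G.deleteEdges D) P := by
  obtain ⟨T, hTle, hT⟩ := (hG.quotientGraph hsurj).exists_isTree_le
  have hlift : Set.SurjOn (Sym2.map P) (crossEdges G P) T.edgeSet := by
    rw [Set.SurjOn, ← edgeSet_quotientGraph]
    exact edgeSet_mono hTle
  obtain ⟨S, hScross, hbij⟩ := hlift.exists_bijOn_subset
  have hcross := crossEdges_deleteEdges_diff hScross
  have hquot : quotientGraph (G.deleteEdges (crossEdges G P \ S)) P = T := by
    rw [← edgeSet_inj, edgeSet_quotientGraph, hcross, hbij.image_eq]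
  refine ⟨crossEdges G P \ S, Set.sdiff_subset, ?_, ?_, hquot ▸ hT, ?_⟩
  · refine connected_of_quotientGraph (fun r => ?_) (hquot ▸ hT.connected)
    rw [induce_deleteEdges_of_subset_crossEdges Set.sdiff_subset]
    exact hcl r
  · rw [hcross, hbij.ncard_eq]
    exact Nat.eq_sub_of_add_eq (by simpa using hT.ncard_edgeSet_add_one)
  · rw [NoParallelCrossEdges, hcross]
    exact hbij.injOn

theorem exists_tree_partitioning [Fintype V] {k : ℕ} (hk : 1 ≤ k)
    (G : SimpleGraph V) (hG : G.Connected) (P : V → Fin k)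
    (hsurj : Function.Surjective P)
    (hcl : ∀ r : Fin k, (G.induce (P ⁻¹' {r})).Connected) :
    ∃ D ⊆ crossEdges G P,
      (G.deleteEdges D).Connected ∧
      (crossEdges (G.deleteEdges D) P).ncard = k - 1 ∧
      (quotientGraph (G.deleteEdges D) P).IsTree ∧
      NoParallelCrossEdges (G.deleteEdges D) P :=
  exists_tree_partitioning_general G hG P hsurj hcl
end

section
/- Let G be a connected simple graph on a finite vertex set V, let P : V → Fin k (k ≥ 1) be a surjective map, and let c be the number of cross edges of G with respect to P. Let D be a set of cross edges of G such that the graph G^D obtained from G by deleting the edges in D is connected, the quotient graph of G^D under P is a tree, and P has no parallel cross edges in G^D. Then |D| = c − (k − 1); that is, every tree partitioning of G with respect to P switches off exactly c − (k − 1) lines. -/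
open Matrix

variable {V : Type*}

/-! With no parallel cross edges, `Sym2.map P` is a bijection from the cross edges that survive
in `G^D` onto the edges of the quotient tree on `k` vertices, so exactly `k - 1` cross edges
survive and the other ones are the edges of `D`. -/

namespace SimpleGraph

theorem IsTree.ncard_edgeSet_add_one_s11 {α : Type*} [Finite α] {H : SimpleGraph α} (hH : H.IsTree) :
    H.edgeSet.ncard + 1 = Nat.card α := by
  classical
  have := Fintype.ofFinite α
  rw [← coe_edgeFinset, Set.ncard_coe_finset, Nat.card_eq_fintype_card]
  exact hH.card_edgeFinset

end SimpleGraph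

section

variable {k : ℕ} (G : SimpleGraph V) (P : V → Fin k)

theorem crossEdges_deleteEdges (D : Set (Sym2 V)) :
    crossEdges (G.deleteEdges D) P = crossEdges G P \ D := by
  ext e
  simp only [crossEdges, SimpleGraph.edgeSet_deleteEdges, Set.mem_ofPred_eq, Set.mem_sdiff]
  tauto

theorem image_crossEdges_eq_edgeSet_quotientGraph :
    Sym2.map P '' crossEdges G P = (quotientGraph G P).edgeSet := by
  ext f
  induction f using Sym2.ind with
  | _ r s =>
    simp only [Set.mem_image, SimpleGraph.mem_edgeSet, quotientGraph]
    constructor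
    · rintro ⟨e, ⟨he, hdiag⟩, hef⟩
      induction e using Sym2.ind with
      | _ u v =>
        rw [Sym2.map_mk] at hdiag hef
        rcases Sym2.eq_iff.mp hef with ⟨rfl, rfl⟩ | ⟨rfl, rfl⟩
        · exact ⟨hdiag, u, v, he, rfl, rfl⟩
        · exact ⟨Ne.symm hdiag, v, u, G.adj_symm he, rfl, rfl⟩
    · rintro ⟨hrs, u, v, huv, rfl, rfl⟩
      exact ⟨s(u, v), ⟨huv, hrs⟩, Sym2.map_mk P u v⟩

variable {G P}

theorem NoParallelCrossEdges.ncard_crossEdges (hpar : NoParallelCrossEdges G P) :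
    (crossEdges G P).ncard = (quotientGraph G P).edgeSet.ncard := by
  rw [← image_crossEdges_eq_edgeSet_quotientGraph, Set.InjOn.ncard_image hpar]

end

theorem tree_partitioning_switches_off_card_general [Fintype V] {k : ℕ}
    (G : SimpleGraph V) (P : V → Fin k)
    (D : Set (Sym2 V)) (hD : D ⊆ crossEdges G P)
    (htree : (quotientGraph (G.deleteEdges D) P).IsTree)
    (hpar : NoParallelCrossEdges (G.deleteEdges D) P) :
    D.ncard = (crossEdges G P).ncard - (k - 1) := by
  have hremaining : (crossEdges G P \ D).ncard = k - 1 := by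
    rw [← crossEdges_deleteEdges, hpar.ncard_crossEdges]
    have := htree.ncard_edgeSet_add_one_s11
    rw [Nat.card_fin] at this
    omega
  have hsplit : (crossEdges G P \ D).ncard + D.ncard = (crossEdges G P).ncard :=
    Set.ncard_sdiff_add_ncard_of_subset hD (Set.toFinite _)
  omega

theorem tree_partitioning_switches_off_card [Fintype V] {k : ℕ} (hk : 1 ≤ k)
    (G : SimpleGraph V) (hG : G.Connected) (P : V → Fin k)
    (hsurj : Function.Surjective P)
    (D : Set (Sym2 V)) (hD : D ⊆ crossEdges G P)
    (hconn : (G.deleteEdges D).Connected)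
    (htree : (quotientGraph (G.deleteEdges D) P).IsTree)
    (hpar : NoParallelCrossEdges (G.deleteEdges D) P) :
    D.ncard = (crossEdges G P).ncard - (k - 1) :=
  tree_partitioning_switches_off_card_general G P D hD htree hpar
end
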